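/- Let f be the fair-on-bids recursion on a list of transactions M, a list of bids b::B' with top bid b, and a counter t. If Q(M) ≥ q_b − t, then in the output matching f(M, b::B', t) the total traded quantity of bid b equals q_b − t. -/
import Mathlib


structure Bid where
  id : ℕ
  timestamp : ℕ
  quantity : ℕ
  price : ℕ
deriving DecidableEq

structure Ask where
  id : ℕ
  timestamp : ℕ
  quantity : ℕ
  price : ℕ
deriving DecidableEq

structure Transaction where
  bid : Bid
  ask : Ask
  quantity : ℕ
  price : ℕ
deriving DecidableEq

/-- Total traded quantity of a list of transactions. -/
def Qty (M : List Transaction) : ℕ := (M.map Transaction.quantity).sum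

/-- Total traded quantity of bid `b` in `M`. -/
def QtyBid (b : Bid) (M : List Transaction) : ℕ :=
  ((M.filter (fun m => m.bid == b)).map Transaction.quantity).sum

/-- Total traded quantity of ask `a` in `M`. -/
def QtyAsk (a : Ask) (M : List Transaction) : ℕ :=
  ((M.filter (fun m => m.ask == a)).map Transaction.quantity).sum

/-- Total traded quantity between bid `b` and ask `a` in `M`. -/
def QtyBidAsk (b : Bid) (a : Ask) (M : List Transaction) : ℕ :=
  ((M.filter (fun m => m.bid == b && m.ask == a)).map Transaction.quantity).sum

/-- Sum of quantities of a list of bids. -/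
def QB (B : List Bid) : ℕ := (B.map Bid.quantity).sum

/-- Sum of quantities of a list of asks. -/
def QA (A : List Ask) : ℕ := (A.map Ask.quantity).sum

/-- `M` is a matching between bids `B` and asks `A`. -/
def Matching (B : List Bid) (A : List Ask) (M : List Transaction) : Prop :=
  (∀ m ∈ M, m.ask.price ≤ m.bid.price) ∧
  (∀ m ∈ M, m.bid ∈ B) ∧
  (∀ m ∈ M, m.ask ∈ A) ∧
  (∀ b ∈ B, QtyBid b M ≤ b.quantity) ∧
  (∀ a ∈ A, QtyAsk a M ≤ a.quantity)

/-- Individual rationality. -/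
def IsIR (M : List Transaction) : Prop :=
  ∀ m ∈ M, m.ask.price ≤ m.price ∧ m.price ≤ m.bid.price

/-- Uniformity: all trade prices equal. -/
def IsUniform (M : List Transaction) : Prop :=
  ∀ m1 ∈ M, ∀ m2 ∈ M, m1.price = m2.price

/-- `b1` is more competitive than `b2`. -/
def MoreCompetitiveBid (b1 b2 : Bid) : Prop :=
  b2.price < b1.price ∨ (b1.price = b2.price ∧ b1.timestamp < b2.timestamp)

/-- `a1` is more competitive than `a2`. -/
def MoreCompetitiveAsk (a1 a2 : Ask) : Prop :=
  a1.price < a2.price ∨ (a1.price = a2.price ∧ a1.timestamp < a2.timestamp)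

def FairOnBids (B : List Bid) (M : List Transaction) : Prop :=
  ∀ b1 ∈ B, ∀ b2 ∈ B, MoreCompetitiveBid b1 b2 → 1 ≤ QtyBid b2 M →
    QtyBid b1 M = b1.quantity

def FairOnAsks (A : List Ask) (M : List Transaction) : Prop :=
  ∀ a1 ∈ A, ∀ a2 ∈ A, MoreCompetitiveAsk a1 a2 → 1 ≤ QtyAsk a2 M →
    QtyAsk a1 M = a1.quantity

def IsFair (B : List Bid) (A : List Ask) (M : List Transaction) : Prop :=
  FairOnBids B M ∧ FairOnAsks A M

/-- "at least as competitive as" order on bids (for sorting, most competitive first). -/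
def BidGE (b1 b2 : Bid) : Prop := ¬ MoreCompetitiveBid b2 b1

/-- "at least as competitive as" order on asks (for sorting, most competitive first). -/
def AskGE (a1 a2 : Ask) : Prop := ¬ MoreCompetitiveAsk a2 a1

/-- The fair-on-bids recursion `f(M, B, t)`. -/
def fob : List Transaction → List Bid → ℕ → List Transaction
  | [], _, _ => []
  | _ :: _, [], _ => []
  | m :: M', b :: B', t =>
    if m.quantity = b.quantity - t then
      ⟨b, m.ask, m.quantity, m.price⟩ :: fob M' B' 0
    else if m.quantity < b.quantity - t then
      ⟨b, m.ask, m.quantity, m.price⟩ :: fob M' (b :: B') (t + m.quantity)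
    else
      ⟨b, m.ask, b.quantity - t, m.price⟩ ::
        fob (⟨m.bid, m.ask, m.quantity - (b.quantity - t), m.price⟩ :: M') B' 0
termination_by M B _ => M.length + B.length
decreasing_by all_goals (simp; try omega)


lemma fob_bid_mem : ∀ (M : List Transaction) (B : List Bid) (t : ℕ),
    ∀ m ∈ fob M B t, m.bid ∈ B := by
  intro M B t
  induction M, B, t using fob.induct with
  | case1 => simp [fob]
  | case2 => simp [fob]
  | case3 m M' b B' t heq ih =>
    intro x hx
    rw [fob, if_pos heq] at hx
    rcases List.mem_cons.mp hx with h | h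
    · simp [h]
    · exact List.mem_cons_of_mem _ (ih x h)
  | case4 m M' b B' t heq hlt ih =>
    intro x hx
    rw [fob, if_neg heq, if_pos hlt] at hx
    rcases List.mem_cons.mp hx with h | h
    · simp [h]
    · exact ih x h
  | case5 m M' b B' t heq hlt ih =>
    intro x hx
    rw [fob, if_neg heq, if_neg hlt] at hx
    rcases List.mem_cons.mp hx with h | h
    · simp [h]
    · exact List.mem_cons_of_mem _ (ih x h)

lemma qtybid_zero (b : Bid) (B : List Bid) (hb : b.id ∉ B.map Bid.id)
    (M : List Transaction) (t : ℕ) : QtyBid b (fob M B t) = 0 := by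
  have hfil : (fob M B t).filter (fun m => m.bid == b) = [] := by
    rw [List.filter_eq_nil_iff]
    intro m hm
    have := fob_bid_mem M B t m hm
    simp only [beq_iff_eq]
    intro hc
    exact hb (List.mem_map.mpr ⟨m.bid, this, by rw [hc]⟩)
  simp [QtyBid, hfil]

lemma aux_main : ∀ (M : List Transaction) (B : List Bid) (t : ℕ),
    ∀ b B', B = b :: B' → (B.map Bid.id).Nodup → b.quantity - t ≤ Qty M →
    QtyBid b (fob M B t) = b.quantity - t := by
  intro M B t
  induction M, B, t using fob.induct with
  | case1 B t =>
    intro b B' hB hnd h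
    simp [Qty] at h
    simp [fob, QtyBid, h]
  | case2 m M' t =>
    intro b B' hB; exact absurd hB (by simp)
  | case3 m M' b0 B0 t heq ih =>
    intro b1 B1 hB hnd h
    injection hB with h1 h2; subst h1; subst h2
    rw [fob, if_pos heq]
    have hb : b0.id ∉ B0.map Bid.id := by
      simp only [List.map_cons, List.nodup_cons] at hnd; exact hnd.1
    have := qtybid_zero b0 B0 hb M' 0
    simp [QtyBid, List.filter] at this ⊢
    omega
  | case4 m M' b0 B0 t heq hlt ih =>
    intro b1 B1 hB hnd h
    injection hB with h1 h2; subst h1; subst h2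
    rw [fob, if_neg heq, if_pos hlt]
    have hq : Qty (m :: M') = m.quantity + Qty M' := by simp [Qty]
    have ih' := ih b0 B0 rfl hnd (by omega)
    simp [QtyBid, List.filter] at ih' ⊢
    omega
  | case5 m M' b0 B0 t heq hlt ih =>
    intro b1 B1 hB hnd h
    injection hB with h1 h2; subst h1; subst h2
    rw [fob, if_neg heq, if_neg hlt]
    have hb : b0.id ∉ B0.map Bid.id := by
      simp only [List.map_cons, List.nodup_cons] at hnd; exact hnd.1
    have := qtybid_zero b0 B0 hb (⟨m.bid, m.ask, m.quantity - (b0.quantity - t), m.price⟩ :: M') 0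
    simp [QtyBid, List.filter] at this ⊢
    omega

theorem statement_7 (M : List Transaction) (b : Bid) (B' : List Bid) (t : ℕ)
    (hnodup : (((b :: B').map Bid.id)).Nodup)
    (h : b.quantity - t ≤ Qty M) :
    QtyBid b (fob M (b :: B') t) = b.quantity - t := by
  exact aux_main M (b::B') t b B' rfl hnodup h
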